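/- arXiv:1910.02234 — 2 statements merged into one kernel-verified Lean document; each statement's English description precedes it below -/
import Mathlib

section
/- Let k be a positive integer. If k is odd then 12(3k² − k + 3(5k−1)²) + 1 ≡ 1 (mod 24(6k−1)), and if k is even then 12(3k² − k + 3k²) + 1 ≡ 1 (mod 24(6k−1)). Hence there exists an even integer l with k ≤ l ≤ 5k−1 such that 12(3k² − k + 3l²) + 1 ≡ 1 (mod 24(6k−1)). -/
lemma odd_case (k m : ℤ) (hm : k = 2 * m + 1) :
    12 * (3 * k ^ 2 - k + 3 * (5 * k - 1) ^ 2) + 1 ≡ 1 [ZMOD 24 * (6 * k - 1)] := by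
  have : ((24 : ℤ) * (6 * k - 1)) ∣ (1 - (12 * (3 * k ^ 2 - k + 3 * (5 * k - 1) ^ 2) + 1)) :=
    ⟨-(13 * m + 5), by subst hm; ring⟩
  exact Int.ModEq.symm ((Int.modEq_iff_dvd).mpr (by simpa using this)).symm

lemma even_case (k m : ℤ) (hm : k = 2 * m) :
    12 * (3 * k ^ 2 - k + 3 * k ^ 2) + 1 ≡ 1 [ZMOD 24 * (6 * k - 1)] := by
  have : ((24 : ℤ) * (6 * k - 1)) ∣ (1 - (12 * (3 * k ^ 2 - k + 3 * k ^ 2) + 1)) :=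
    ⟨-m, by subst hm; ring⟩
  exact Int.ModEq.symm ((Int.modEq_iff_dvd).mpr (by simpa using this)).symm

/-- For a positive integer `k`: if `k` is odd then
`12(3k² − k + 3(5k−1)²) + 1 ≡ 1 (mod 24(6k−1))`, if `k` is even then
`12(3k² − k + 3k²) + 1 ≡ 1 (mod 24(6k−1))`; hence some even `l` with `k ≤ l ≤ 5k−1`
satisfies `12(3k² − k + 3l²) + 1 ≡ 1 (mod 24(6k−1))`. -/
theorem cs_minimal_value (k : ℤ) (hk : 0 < k) :
    (Odd k → 12 * (3 * k ^ 2 - k + 3 * (5 * k - 1) ^ 2) + 1 ≡ 1 [ZMOD 24 * (6 * k - 1)]) ∧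
    (Even k → 12 * (3 * k ^ 2 - k + 3 * k ^ 2) + 1 ≡ 1 [ZMOD 24 * (6 * k - 1)]) ∧
    (∃ l : ℤ, Even l ∧ k ≤ l ∧ l ≤ 5 * k - 1 ∧
      12 * (3 * k ^ 2 - k + 3 * l ^ 2) + 1 ≡ 1 [ZMOD 24 * (6 * k - 1)]) := by
  refine ⟨fun ⟨m, hm⟩ => odd_case k m (by linarith), fun ⟨m, hm⟩ => even_case k m (by linarith), ?_⟩
  rcases Int.even_or_odd k with he | ho
  · obtain ⟨m, hm⟩ := he
    exact ⟨k, by exact ⟨m, hm⟩, le_refl k, by linarith, even_case k m (by linarith)⟩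
  · obtain ⟨m, hm⟩ := ho
    refine ⟨5 * k - 1, ⟨5 * m + 2, by linarith⟩, by linarith, le_refl _, odd_case k m hm⟩
end

section
/- For α, β ∈ [0, π], define R(θ) = diag(e^{iθ}, e^{-iθ}) ∈ SU(2) and for U ∈ SU(2) let angle(U) = arccos(trace(U)/2) ∈ [0, π]. Then { angle(AB) : A conjugate to R(α), B conjugate to R(β) } = [ |α − β|, min(α + β, 2π − α − β) ]. -/
/-- The diagonal matrix `diag(e^{iθ}, e^{-iθ})`. -/
noncomputable def diagRot (θ : ℝ) : Matrix (Fin 2) (Fin 2) ℂ :=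
  !![Complex.exp (θ * Complex.I), 0; 0, Complex.exp (-θ * Complex.I)]

/-- The angle of an SU(2) matrix: `arccos(trace/2) ∈ [0, π]`. -/
noncomputable def su2Angle (U : Matrix (Fin 2) (Fin 2) ℂ) : ℝ :=
  Real.arccos (U.trace.re / 2)

open Complex Matrix in
private lemma su2aux_trace_eq (α β : ℝ) (u : Matrix (Fin 2) (Fin 2) ℂ) :
    (diagRot α * (u * diagRot β * star u)).trace =
      (normSq (u 0 0) : ℂ) * exp ((↑(α + β)) * I)
      + (normSq (u 0 1) : ℂ) * exp ((↑(α - β)) * I)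
      + (normSq (u 1 0) : ℂ) * exp ((↑(β - α)) * I)
      + (normSq (u 1 1) : ℂ) * exp ((↑(-α - β)) * I) := by
  have e1 : exp ((↑(α + β)) * I) = exp (↑α * I) * exp (↑β * I) := by
    rw [← Complex.exp_add]; congr 1; push_cast; ring
  have e2 : exp ((↑(α - β)) * I) = exp (↑α * I) * exp (-↑β * I) := by
    rw [← Complex.exp_add]; congr 1; push_cast; ring
  have e3 : exp ((↑(β - α)) * I) = exp (-↑α * I) * exp (↑β * I) := by
    rw [← Complex.exp_add]; congr 1; push_cast; ring
  have e4 : exp ((↑(-α - β)) * I) = exp (-↑α * I) * exp (-↑β * I) := by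
    rw [← Complex.exp_add]; congr 1; push_cast; ring
  have ha := Complex.mul_conj (u 0 0)
  have hb := Complex.mul_conj (u 0 1)
  have hc := Complex.mul_conj (u 1 0)
  have hd := Complex.mul_conj (u 1 1)
  rw [e1, e2, e3, e4]
  simp only [diagRot, Matrix.trace_fin_two, Matrix.mul_apply, Fin.sum_univ_two,
    Matrix.star_apply, Matrix.cons_val', Matrix.cons_val_zero, Matrix.cons_val_one,
    Matrix.head_cons, Matrix.empty_val', Matrix.cons_val_fin_one, Matrix.head_fin_const,
    RCLike.star_def, Matrix.of_apply]
  linear_combination (exp (↑α * I) * exp (↑β * I)) * ha + (exp (↑α * I) * exp (-↑β * I)) * hb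
    + (exp (-↑α * I) * exp (↑β * I)) * hc + (exp (-↑α * I) * exp (-↑β * I)) * hd

open Complex Matrix in
private lemma su2aux_trace_re (α β : ℝ) (u : Matrix (Fin 2) (Fin 2) ℂ) :
    (diagRot α * (u * diagRot β * star u)).trace.re =
      (normSq (u 0 0) + normSq (u 1 1)) * Real.cos (α + β)
      + (normSq (u 0 1) + normSq (u 1 0)) * Real.cos (α - β) := by
  rw [su2aux_trace_eq]
  simp only [Complex.add_re, Complex.re_ofReal_mul, Complex.exp_ofReal_mul_I_re]
  rw [show β - α = -(α - β) by ring, show -α - β = -(α + β) by ring, Real.cos_neg, Real.cos_neg]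
  ring

open Complex Matrix in
private lemma su2aux_unit_rels (u : Matrix (Fin 2) (Fin 2) ℂ)
    (hu : u ∈ Matrix.unitaryGroup (Fin 2) ℂ) :
    normSq (u 0 0) + normSq (u 0 1) = 1 ∧ normSq (u 1 0) = normSq (u 0 1) ∧
      normSq (u 1 1) = normSq (u 0 0) := by
  have h1 := Matrix.mem_unitaryGroup_iff.mp hu
  have h2 := Matrix.mem_unitaryGroup_iff'.mp hu
  have e1 := congrFun (congrFun h1 0) 0
  have e2 := congrFun (congrFun h2 0) 0
  have e3 := congrFun (congrFun h1 1) 1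
  simp only [Matrix.mul_apply, Fin.sum_univ_two, Matrix.star_apply, Matrix.one_apply_eq,
    RCLike.star_def] at e1 e2 e3
  rw [Complex.mul_conj, Complex.mul_conj, ← Complex.ofReal_add, ← Complex.ofReal_one] at e1 e3
  rw [mul_comm ((starRingEnd ℂ) (u 0 0)), mul_comm ((starRingEnd ℂ) (u 1 0)),
    Complex.mul_conj, Complex.mul_conj, ← Complex.ofReal_add, ← Complex.ofReal_one] at e2
  have e1' := Complex.ofReal_injective e1
  have e2' := Complex.ofReal_injective e2
  have e3' := Complex.ofReal_injective e3
  refine ⟨e1', by linarith, by linarith⟩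

private lemma su2aux_arccos_le_arccos {x y : ℝ} (h : x ≤ y) :
    Real.arccos y ≤ Real.arccos x := by
  simp only [Real.arccos_eq_pi_div_two_sub_arcsin]
  have := Real.monotone_arcsin h
  linarith

private lemma su2aux_cos_min (α β : ℝ) (hα : α ∈ Set.Icc 0 Real.pi)
    (hβ : β ∈ Set.Icc 0 Real.pi) :
    Real.cos (min (α + β) (2 * Real.pi - α - β)) = Real.cos (α + β) := by
  rcases min_cases (α + β) (2 * Real.pi - α - β) with ⟨h, _⟩ | ⟨h, _⟩
  · rw [h]
  · rw [h, show 2 * Real.pi - α - β = 2 * Real.pi - (α + β) by ring, Real.cos_two_pi_sub]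

private lemma su2aux_min_mem (α β : ℝ) (hα : α ∈ Set.Icc 0 Real.pi)
    (hβ : β ∈ Set.Icc 0 Real.pi) :
    min (α + β) (2 * Real.pi - α - β) ∈ Set.Icc (|α - β|) Real.pi := by
  obtain ⟨hα0, hαπ⟩ := hα; obtain ⟨hβ0, hβπ⟩ := hβ
  constructor
  · rcases abs_cases (α - β) with ⟨h, _⟩ | ⟨h, _⟩ <;>
      · rw [h]; simp only [le_min_iff]; constructor <;> linarith
  · rcases le_total (α + β) Real.pi with h | h
    · exact (min_le_left _ _).trans h
    · exact (min_le_right _ _).trans (by linarith)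

/-- The key range computation: for `t ∈ [0,1]`,
`arccos (t cos(α+β) + (1-t) cos(α-β))` lies in the claimed interval. -/
private lemma su2aux_angle_mem (α β t : ℝ) (hα : α ∈ Set.Icc 0 Real.pi)
    (hβ : β ∈ Set.Icc 0 Real.pi) (ht : t ∈ Set.Icc (0:ℝ) 1) :
    Real.arccos (t * Real.cos (α + β) + (1 - t) * Real.cos (α - β)) ∈
      Set.Icc (|α - β|) (min (α + β) (2 * Real.pi - α - β)) := by
  obtain ⟨hα0, hαπ⟩ := hα; obtain ⟨hβ0, hβπ⟩ := hβ
  have hsa : 0 ≤ Real.sin α := Real.sin_nonneg_of_nonneg_of_le_pi hα0 hαπ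
  have hsb : 0 ≤ Real.sin β := Real.sin_nonneg_of_nonneg_of_le_pi hβ0 hβπ
  have hcc : Real.cos (α + β) ≤ Real.cos (α - β) := by
    rw [Real.cos_add, Real.cos_sub]; nlinarith
  have hr1 : Real.cos (α + β) ≤ t * Real.cos (α + β) + (1 - t) * Real.cos (α - β) := by
    nlinarith [ht.1, ht.2]
  have hr2 : t * Real.cos (α + β) + (1 - t) * Real.cos (α - β) ≤ Real.cos (α - β) := by
    nlinarith [ht.1, ht.2]
  have habs : |α - β| ∈ Set.Icc 0 Real.pi := by
    refine ⟨abs_nonneg _, ?_⟩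
    rcases abs_cases (α - β) with ⟨h, _⟩ | ⟨h, _⟩ <;> rw [h] <;> linarith
  have hmin := su2aux_min_mem α β ⟨hα0, hαπ⟩ ⟨hβ0, hβπ⟩
  constructor
  · calc |α - β| = Real.arccos (Real.cos |α - β|) :=
          (Real.arccos_cos habs.1 habs.2).symm
      _ = Real.arccos (Real.cos (α - β)) := by rw [Real.cos_abs]
      _ ≤ _ := su2aux_arccos_le_arccos hr2
  · calc Real.arccos (t * Real.cos (α + β) + (1 - t) * Real.cos (α - β))
        ≤ Real.arccos (Real.cos (α + β)) := su2aux_arccos_le_arccos hr1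
      _ = Real.arccos (Real.cos (min (α + β) (2 * Real.pi - α - β))) := by
          rw [su2aux_cos_min α β ⟨hα0, hαπ⟩ ⟨hβ0, hβπ⟩]
      _ = min (α + β) (2 * Real.pi - α - β) :=
          Real.arccos_cos ((abs_nonneg _).trans hmin.1) hmin.2

private lemma su2aux_exists_t (α β x : ℝ) (hα : α ∈ Set.Icc 0 Real.pi)
    (hβ : β ∈ Set.Icc 0 Real.pi)
    (hx : x ∈ Set.Icc (|α - β|) (min (α + β) (2 * Real.pi - α - β))) :
    ∃ t ∈ Set.Icc (0:ℝ) 1,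
      t * Real.cos (α + β) + (1 - t) * Real.cos (α - β) = Real.cos x := by
  have hmin := su2aux_min_mem α β hα hβ
  have hx0 : 0 ≤ x := (abs_nonneg _).trans hx.1
  have hxπ : x ≤ Real.pi := hx.2.trans hmin.2
  have habs : |α - β| ≤ Real.pi := by
    rcases abs_cases (α - β) with ⟨h, _⟩ | ⟨h, _⟩ <;> rw [h] <;>
      [linarith [hα.2, hβ.1]; linarith [hβ.2, hα.1]]
  have hc1 : Real.cos x ≤ Real.cos (α - β) := by
    rw [← Real.cos_abs (α - β)]
    exact Real.cos_le_cos_of_nonneg_of_le_pi (abs_nonneg _) hxπ hx.1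
  have hc2 : Real.cos (α + β) ≤ Real.cos x := by
    rw [← su2aux_cos_min α β hα hβ]
    exact Real.cos_le_cos_of_nonneg_of_le_pi hx0 hmin.2 hx.2
  set D := Real.cos (α - β) - Real.cos (α + β) with hD
  rcases eq_or_lt_of_le (show (0:ℝ) ≤ D by simp only [hD]; linarith) with h0 | h0
  · exact ⟨0, ⟨le_refl 0, zero_le_one⟩, by nlinarith⟩
  · refine ⟨(Real.cos (α - β) - Real.cos x) / D, ⟨div_nonneg (by linarith) h0.le, ?_⟩, ?_⟩
    · rw [div_le_one h0]; simp only [hD]; linarith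
    · field_simp
      ring

open Complex Matrix in
private lemma su2aux_angle_eq (α β : ℝ) (u : Matrix (Fin 2) (Fin 2) ℂ)
    (hu : u ∈ Matrix.unitaryGroup (Fin 2) ℂ) :
    su2Angle (diagRot α * (u * diagRot β * star u)) =
      Real.arccos (normSq (u 0 0) * Real.cos (α + β)
        + (1 - normSq (u 0 0)) * Real.cos (α - β)) := by
  obtain ⟨h1, h2, h3⟩ := su2aux_unit_rels u hu
  unfold su2Angle
  rw [su2aux_trace_re]
  congr 1
  rw [h2, h3]
  have : normSq (u 0 1) = 1 - normSq (u 0 0) := by linarith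
  rw [this]
  ring

/-- For `α, β ∈ [0, π]`, the set of angles of products `A * B` where `A` is SU(2)-conjugate
to `diag(e^{iα}, e^{-iα})` and `B` is SU(2)-conjugate to `diag(e^{iβ}, e^{-iβ})` is the
interval `[|α − β|, min (α + β) (2π − α − β)]`. -/
theorem su2_angle_product_interval (α β : ℝ)
    (hα : α ∈ Set.Icc 0 Real.pi) (hβ : β ∈ Set.Icc 0 Real.pi) :
    {x : ℝ | ∃ A B : Matrix (Fin 2) (Fin 2) ℂ,
        (∃ g ∈ Matrix.specialUnitaryGroup (Fin 2) ℂ, g * diagRot α * g⁻¹ = A) ∧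
        (∃ g ∈ Matrix.specialUnitaryGroup (Fin 2) ℂ, g * diagRot β * g⁻¹ = B) ∧
        x = su2Angle (A * B)} =
      Set.Icc |α - β| (min (α + β) (2 * Real.pi - α - β)) := by
  ext x
  simp only [Set.mem_setOf_eq]
  constructor
  · rintro ⟨A, B, ⟨g, hg, rfl⟩, ⟨h, hh, rfl⟩, rfl⟩
    have hgu : g ∈ Matrix.unitaryGroup (Fin 2) ℂ :=
      (Matrix.mem_specialUnitaryGroup_iff.mp hg).1
    have hhu : h ∈ Matrix.unitaryGroup (Fin 2) ℂ :=
      (Matrix.mem_specialUnitaryGroup_iff.mp hh).1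
    have hginv : g⁻¹ = star g := Matrix.inv_eq_left_inv (Matrix.mem_unitaryGroup_iff'.mp hgu)
    have hhinv : h⁻¹ = star h := Matrix.inv_eq_left_inv (Matrix.mem_unitaryGroup_iff'.mp hhu)
    set u : Matrix (Fin 2) (Fin 2) ℂ := star g * h with hu_def
    have hu : u ∈ Matrix.unitaryGroup (Fin 2) ℂ :=
      mul_mem (Unitary.star_mem hgu) hhu
    have hstaru : star u = star h * g := by rw [hu_def, star_mul, star_star]
    have hgg : g * star g = 1 := Matrix.mem_unitaryGroup_iff.mp hgu
    have hgg' : star g * g = 1 := Matrix.mem_unitaryGroup_iff'.mp hgu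
    have key : (g * diagRot α * g⁻¹) * (h * diagRot β * h⁻¹) =
        g * (diagRot α * (u * diagRot β * star u)) * star g := by
      rw [hginv, hhinv, hstaru, hu_def]
      calc (g * diagRot α * star g) * (h * diagRot β * star h)
          = (g * diagRot α * star g) * (h * diagRot β * star h) * (g * star g) := by
            rw [hgg, mul_one]
        _ = g * (diagRot α * ((star g * h) * diagRot β * (star h * g))) * star g := by
            simp only [Matrix.mul_assoc]
    have htr : ((g * diagRot α * g⁻¹) * (h * diagRot β * h⁻¹)).trace =
        (diagRot α * (u * diagRot β * star u)).trace := by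
      rw [key, Matrix.trace_mul_cycle, ← Matrix.mul_assoc, hgg', Matrix.one_mul]
    have hangle : su2Angle ((g * diagRot α * g⁻¹) * (h * diagRot β * h⁻¹)) =
        su2Angle (diagRot α * (u * diagRot β * star u)) := by
      unfold su2Angle; rw [htr]
    rw [hangle, su2aux_angle_eq α β u hu]
    have ht : Complex.normSq (u 0 0) ∈ Set.Icc (0:ℝ) 1 := by
      obtain ⟨h1, _, _⟩ := su2aux_unit_rels u hu
      exact ⟨Complex.normSq_nonneg _, by nlinarith [Complex.normSq_nonneg (u 0 1)]⟩
    exact su2aux_angle_mem α β _ hα hβ ht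
  · intro hx
    obtain ⟨t, ht, hteq⟩ := su2aux_exists_t α β x hα hβ hx
    set c : ℝ := Real.sqrt t with hc
    set s : ℝ := Real.sqrt (1 - t) with hs
    have hc2 : c ^ 2 = t := Real.sq_sqrt ht.1
    have hs2 : s ^ 2 = 1 - t := Real.sq_sqrt (by linarith [ht.2])
    set u : Matrix (Fin 2) (Fin 2) ℂ := !![(c : ℂ), -(s : ℂ); (s : ℂ), (c : ℂ)] with hu_def
    have hstar : star u = !![(c : ℂ), (s : ℂ); -(s : ℂ), (c : ℂ)] := by
      rw [hu_def]
      ext i j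
      fin_cases i <;> fin_cases j <;>
        simp [Matrix.star_apply]
    have hcs : (c : ℂ) * c + (s : ℂ) * s = 1 := by
      push_cast
      rw [show (c:ℂ) * c = ((c^2 : ℝ) : ℂ) by push_cast; ring,
        show (s:ℂ) * s = ((s^2 : ℝ) : ℂ) by push_cast; ring, hc2, hs2]
      push_cast; ring
    have huu : u * star u = 1 := by
      rw [hstar, hu_def]
      ext i j
      fin_cases i <;> fin_cases j <;>
        simp [Matrix.mul_apply, Fin.sum_univ_two, Matrix.one_apply] <;>
        first | linear_combination hcs | ring
    have huu' : star u * u = 1 := by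
      rw [hstar, hu_def]
      ext i j
      fin_cases i <;> fin_cases j <;>
        simp [Matrix.mul_apply, Fin.sum_univ_two, Matrix.one_apply] <;>
        first | linear_combination hcs | ring
    have hu : u ∈ Matrix.unitaryGroup (Fin 2) ℂ := Matrix.mem_unitaryGroup_iff.mpr huu
    have hdet : u.det = 1 := by
      rw [hu_def, Matrix.det_fin_two_of]
      linear_combination hcs
    have husu : u ∈ Matrix.specialUnitaryGroup (Fin 2) ℂ :=
      Matrix.mem_specialUnitaryGroup_iff.mpr ⟨hu, hdet⟩
    have huinv : u⁻¹ = star u := Matrix.inv_eq_left_inv huu'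
    refine ⟨diagRot α, u * diagRot β * u⁻¹, ⟨1, one_mem _, by simp⟩, ⟨u, husu, rfl⟩, ?_⟩
    have hmin := su2aux_min_mem α β hα hβ
    have hx0 : 0 ≤ x := (abs_nonneg _).trans hx.1
    have hxπ : x ≤ Real.pi := hx.2.trans hmin.2
    have h00 : Complex.normSq (u 0 0) = t := by
      rw [hu_def]
      simp only [Matrix.cons_val', Matrix.cons_val_zero, Matrix.empty_val',
        Matrix.cons_val_fin_one, Matrix.of_apply, Complex.normSq_ofReal]
      nlinarith [hc2]
    rw [huinv, su2aux_angle_eq α β u hu, h00, hteq, Real.arccos_cos hx0 hxπ]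
end
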